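/- arXiv:2504.02716 — 2 statements merged into one kernel-verified Lean document; each statement's English description precedes it below -/
import Mathlib

section
/- Let h₁₁ > 0, h₂₂ > 0 and d > 0 be real numbers, let U ⊆ ℝ² be an open set containing the segment (0,d)×{0}, and let v : ℝ² → ℝ be infinitely differentiable on U. Assume that h₁₁ ∂²v/∂x₁²(x) + h₂₂ ∂²v/∂x₂²(x) = 0 for every x ∈ U with x₂ > 0, and that v(x₁,0) = 0 for every x₁ ∈ (0,d). Then for every natural number p and every x₁ ∈ (0,d) one has (∂/∂x₁)^p v(x₁,0) = 0 and (∂/∂x₂)^{2p} v(x₁,0) = 0. -/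
noncomputable def pd (u : ℝ × ℝ) (f : ℝ × ℝ → ℝ) : ℝ × ℝ → ℝ := fun x => fderiv ℝ f x u

lemma pd_smooth {f : ℝ×ℝ→ℝ} {U : Set (ℝ×ℝ)} (hU : IsOpen U) (h : ContDiffOn ℝ (⊤ : ℕ∞) f U)
    (u : ℝ×ℝ) : ContDiffOn ℝ (⊤ : ℕ∞) (pd u f) U :=
  (h.fderiv_of_isOpen hU (by simp)).clm_apply contDiffOn_const

lemma pd_iter_smooth {f : ℝ×ℝ→ℝ} {U : Set (ℝ×ℝ)} (hU : IsOpen U) (h : ContDiffOn ℝ (⊤ : ℕ∞) f U)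
    (u : ℝ×ℝ) (n : ℕ) : ContDiffOn ℝ (⊤ : ℕ∞) ((pd u)^[n] f) U := by
  induction n with
  | zero => exact h
  | succ n ih => rw [Function.iterate_succ_apply']; exact pd_smooth hU ih u

lemma pd_congr {f g : ℝ×ℝ→ℝ} {U : Set (ℝ×ℝ)} (hU : IsOpen U) (h : Set.EqOn f g U)
    (u : ℝ×ℝ) : Set.EqOn (pd u f) (pd u g) U := by
  intro x hx
  have : f =ᶠ[nhds x] g := Filter.eventuallyEq_of_mem (hU.mem_nhds hx) h
  simp only [pd, this.fderiv_eq]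

lemma pd_iter_congr {f g : ℝ×ℝ→ℝ} {U : Set (ℝ×ℝ)} (hU : IsOpen U) (h : Set.EqOn f g U)
    (u : ℝ×ℝ) (n : ℕ) : Set.EqOn ((pd u)^[n] f) ((pd u)^[n] g) U := by
  induction n with
  | zero => exact h
  | succ n ih => rw [Function.iterate_succ_apply', Function.iterate_succ_apply']
                 exact pd_congr hU ih u

lemma pd_comm {f : ℝ×ℝ→ℝ} {U : Set (ℝ×ℝ)} (hU : IsOpen U) (h : ContDiffOn ℝ (⊤ : ℕ∞) f U)
    (a b : ℝ×ℝ) {x : ℝ×ℝ} (hx : x ∈ U) : pd a (pd b f) x = pd b (pd a f) x := by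
  have hUx := hU.mem_nhds hx
  have hdf : DifferentiableAt ℝ (fderiv ℝ f) x := by
    have := (h.contDiffAt hUx).fderiv_right (m := 1) (WithTop.coe_le_coe.mpr le_top)
    exact this.differentiableAt one_ne_zero
  have hev : ∀ᶠ y in nhds x, HasFDerivAt f (fderiv ℝ f y) y := by
    filter_upwards [hU.eventually_mem hx] with y hy
    exact ((h.contDiffAt (hU.mem_nhds hy)).differentiableAt (by simp)).hasFDerivAt
  have hsymm := second_derivative_symmetric_of_eventually hev hdf.hasFDerivAt
  have key : ∀ c d : ℝ×ℝ, pd c (pd d f) x = fderiv ℝ (fderiv ℝ f) x c d := by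
    intro c d
    have : pd d f = fun y => (fderiv ℝ f y) d := rfl
    rw [show pd c (pd d f) x = fderiv ℝ (fun y => (fderiv ℝ f y) d) x c from rfl]
    rw [fderiv_clm_apply hdf (differentiableAt_const d)]
    simp
  rw [key a b, key b a, hsymm]

lemma pd_iter_comm {f : ℝ×ℝ→ℝ} {U : Set (ℝ×ℝ)} (hU : IsOpen U) (h : ContDiffOn ℝ (⊤ : ℕ∞) f U)
    (a b : ℝ×ℝ) (n : ℕ) : Set.EqOn ((pd a)^[n] (pd b f)) (pd b ((pd a)^[n] f)) U := by
  induction n generalizing f with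
  | zero => exact fun x _ => rfl
  | succ n ih =>
    intro x hx
    rw [Function.iterate_succ_apply]
    have e1 : Set.EqOn ((pd a)^[n] (pd a (pd b f))) ((pd a)^[n] (pd b (pd a f))) U :=
      pd_iter_congr hU (fun y hy => pd_comm hU h a b hy) a n
    rw [e1 hx, ih (pd_smooth hU h a) hx, Function.iterate_succ_apply]

-- linearity
lemma pd_lin {F G : ℝ×ℝ→ℝ} {x : ℝ×ℝ} (hF : DifferentiableAt ℝ F x)
    (hG : DifferentiableAt ℝ G x) (c c' : ℝ) (u : ℝ×ℝ) :
    pd u (fun y => c * F y + c' * G y) x = c * pd u F x + c' * pd u G x := by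
  have h1 : HasFDerivAt (fun y => c * F y + c' * G y)
      (c • fderiv ℝ F x + c' • fderiv ℝ G x) x :=
    (hF.hasFDerivAt.const_mul c).add (hG.hasFDerivAt.const_mul c')
  simp [pd, h1.fderiv]

lemma pd_const_mul {F : ℝ×ℝ→ℝ} {x : ℝ×ℝ} (hF : DifferentiableAt ℝ F x) (c : ℝ) (u : ℝ×ℝ) :
    pd u (fun y => c * F y) x = c * pd u F x := by
  have h1 : HasFDerivAt (fun y => c * F y) (c • fderiv ℝ F x) x := hF.hasFDerivAt.const_mul c
  simp [pd, h1.fderiv]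

-- slice lemma (second coordinate); e = direction
lemma slice_snd {f : ℝ×ℝ→ℝ} {U : Set (ℝ×ℝ)} (hU : IsOpen U) (h : ContDiffOn ℝ (⊤ : ℕ∞) f U)
    (n : ℕ) : ∀ a b : ℝ, (a, b) ∈ U →
    iteratedDeriv n (fun t => f (a, t)) b = (pd (0,1))^[n] f (a, b) := by
  induction n with
  | zero => intro a b _; simp
  | succ n ih =>
    intro a b hab
    rw [iteratedDeriv_succ]
    have hsopen : IsOpen {t : ℝ | (a, t) ∈ U} := by
      have : Continuous (fun t : ℝ => ((a, t) : ℝ×ℝ)) := by fun_prop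
      exact hU.preimage this
    have hev : iteratedDeriv n (fun t => f (a, t)) =ᶠ[nhds b]
        (fun t => (pd (0,1))^[n] f (a, t)) := by
      filter_upwards [hsopen.mem_nhds hab] with t ht
      exact ih a t ht
    rw [hev.deriv_eq]
    set w := (pd (0,1))^[n] f with hw
    have hwdiff : DifferentiableAt ℝ w (a, b) :=
      ((pd_iter_smooth hU h (0,1) n).contDiffAt (hU.mem_nhds hab)).differentiableAt (by simp)
    have hpath : HasDerivAt (fun t : ℝ => ((a, t) : ℝ×ℝ)) ((0:ℝ),(1:ℝ)) b :=
      HasDerivAt.prodMk (hasDerivAt_const b a) (hasDerivAt_id b)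
    have : HasDerivAt (fun t => w (a, t)) (fderiv ℝ w (a, b) (0,1)) b :=
      hwdiff.hasFDerivAt.comp_hasDerivAt b hpath
    rw [this.deriv, Function.iterate_succ_apply']
    rfl

lemma slice_fst {f : ℝ×ℝ→ℝ} {U : Set (ℝ×ℝ)} (hU : IsOpen U) (h : ContDiffOn ℝ (⊤ : ℕ∞) f U)
    (n : ℕ) : ∀ a b : ℝ, (a, b) ∈ U →
    iteratedDeriv n (fun t => f (t, b)) a = (pd (1,0))^[n] f (a, b) := by
  induction n with
  | zero => intro a b _; simp
  | succ n ih =>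
    intro a b hab
    rw [iteratedDeriv_succ]
    have hsopen : IsOpen {t : ℝ | (t, b) ∈ U} := by
      have : Continuous (fun t : ℝ => ((t, b) : ℝ×ℝ)) := by fun_prop
      exact hU.preimage this
    have hev : iteratedDeriv n (fun t => f (t, b)) =ᶠ[nhds a]
        (fun t => (pd (1,0))^[n] f (t, b)) := by
      filter_upwards [hsopen.mem_nhds hab] with t ht
      exact ih t b ht
    rw [hev.deriv_eq]
    set w := (pd (1,0))^[n] f with hw
    have hwdiff : DifferentiableAt ℝ w (a, b) :=
      ((pd_iter_smooth hU h (1,0) n).contDiffAt (hU.mem_nhds hab)).differentiableAt (by simp)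
    have hpath : HasDerivAt (fun t : ℝ => ((t, b) : ℝ×ℝ)) ((1:ℝ),(0:ℝ)) a :=
      HasDerivAt.prodMk (hasDerivAt_id a) (hasDerivAt_const a b)
    have : HasDerivAt (fun t => w (t, b)) (fderiv ℝ w (a, b) (1,0)) a :=
      hwdiff.hasFDerivAt.comp_hasDerivAt a hpath
    rw [this.deriv, Function.iterate_succ_apply']
    rfl

-- zero on open set
lemma zero_iter {f : ℝ → ℝ} {s : Set ℝ} (hs : IsOpen s) (h : ∀ x ∈ s, f x = 0)
    (n : ℕ) : ∀ x ∈ s, iteratedDeriv n f x = 0 := by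
  induction n with
  | zero => exact h
  | succ n ih =>
    intro x hx
    rw [iteratedDeriv_succ]
    have hev : iteratedDeriv n f =ᶠ[nhds x] (fun _ => (0:ℝ)) := by
      filter_upwards [hs.mem_nhds hx] with t ht using ih t ht
    rw [hev.deriv_eq]; simp

/-- Proposition 3.1: for a smooth solution `v` of the anisotropic Laplace equation
`h₁₁ ∂²v/∂x₁² + h₂₂ ∂²v/∂x₂² = 0` in the upper half-plane part of a neighbourhood `U`
of the segment `(0,d) × {0}`, vanishing on that segment, all pure `x₁`-derivatives
and all even-order `x₂`-derivatives vanish on the segment. -/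
theorem derivatives_vanish_on_flat_boundary
    (h₁₁ h₂₂ d : ℝ) (hh₁₁ : 0 < h₁₁) (hh₂₂ : 0 < h₂₂) (hd : 0 < d)
    (U : Set (ℝ × ℝ)) (hU : IsOpen U)
    (hseg : ∀ x₁ ∈ Set.Ioo (0:ℝ) d, ((x₁, (0:ℝ)) : ℝ × ℝ) ∈ U)
    (v : ℝ × ℝ → ℝ) (hv : ContDiffOn ℝ (⊤ : ℕ∞) v U)
    (hpde : ∀ x ∈ U, 0 < x.2 →
      h₁₁ * iteratedDeriv 2 (fun t => v (t, x.2)) x.1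
        + h₂₂ * iteratedDeriv 2 (fun s => v (x.1, s)) x.2 = 0)
    (hbdry : ∀ x₁ ∈ Set.Ioo (0:ℝ) d, v (x₁, 0) = 0) :
    ∀ p : ℕ, ∀ x₁ ∈ Set.Ioo (0:ℝ) d,
      iteratedDeriv p (fun t => v (t, 0)) x₁ = 0 ∧
      iteratedDeriv (2 * p) (fun s => v (x₁, s)) 0 = 0 := by
  set e₁ : ℝ × ℝ := (1, 0) with he₁
  set e₂ : ℝ × ℝ := (0, 1) with he₂
  set V : Set (ℝ × ℝ) := U ∩ {x | 0 < x.2} with hVdef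
  have hV : IsOpen V := hU.inter (isOpen_lt continuous_const continuous_snd)
  have hVU : V ⊆ U := Set.inter_subset_left
  set c : ℝ := -(h₁₁ / h₂₂) with hc
  -- PDE in pd form
  have hpde' : ∀ x ∈ V, h₁₁ * (pd e₁)^[2] v x + h₂₂ * (pd e₂)^[2] v x = 0 := by
    rintro ⟨a, b⟩ ⟨haU, hb⟩
    have h1 := slice_fst hU hv 2 a b haU
    have h2 := slice_snd hU hv 2 a b haU
    have := hpde (a, b) haU hb
    simp only at this h1 h2
    rw [h1, h2] at this
    exact this
  -- differentiated PDE
  have word_pde : ∀ n : ℕ, ∀ x ∈ V,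
      h₁₁ * (pd e₂)^[n] ((pd e₁)^[2] v) x + h₂₂ * (pd e₂)^[n] ((pd e₂)^[2] v) x = 0 := by
    intro n
    induction n with
    | zero => exact hpde'
    | succ n ih =>
      intro x hx
      set F := (pd e₂)^[n] ((pd e₁)^[2] v) with hF
      set G := (pd e₂)^[n] ((pd e₂)^[2] v) with hG
      have hFs : ContDiffOn ℝ (⊤ : ℕ∞) F U := pd_iter_smooth hU (pd_iter_smooth hU hv e₁ 2) e₂ n
      have hGs : ContDiffOn ℝ (⊤ : ℕ∞) G U := pd_iter_smooth hU (pd_iter_smooth hU hv e₂ 2) e₂ n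
      have hFd : DifferentiableAt ℝ F x :=
        (hFs.contDiffAt (hU.mem_nhds (hVU hx))).differentiableAt (by simp)
      have hGd : DifferentiableAt ℝ G x :=
        (hGs.contDiffAt (hU.mem_nhds (hVU hx))).differentiableAt (by simp)
      have heq : Set.EqOn (fun y => h₁₁ * F y + h₂₂ * G y) (fun _ => (0:ℝ)) V :=
        fun y hy => ih y hy
      have h1 : pd e₂ (fun y => h₁₁ * F y + h₂₂ * G y) x = pd e₂ (fun _ => (0:ℝ)) x :=
        pd_congr hV heq e₂ hx
      have h2 : pd e₂ (fun _ => (0:ℝ)) x = 0 := by simp [pd]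
      rw [pd_lin hFd hGd h₁₁ h₂₂ e₂] at h1
      have e1 : (pd e₂)^[n+1] ((pd e₁)^[2] v) x = pd e₂ F x := by
        rw [hF, Function.iterate_succ_apply']
      have e2 : (pd e₂)^[n+1] ((pd e₂)^[2] v) x = pd e₂ G x := by
        rw [hG, Function.iterate_succ_apply']
      rw [e1, e2]
      linarith [h1, h2]
  -- main identity on V
  have main : ∀ k : ℕ, ∀ x ∈ V, (pd e₂)^[2*k] v x = c^k * (pd e₁)^[2*k] v x := by
    intro k
    induction k with
    | zero => intro x _; simp
    | succ k ih =>
      intro x hx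
      have hxU : x ∈ U := hVU hx
      have h2k : 2 * (k + 1) = 2 * k + 2 := by ring
      rw [h2k, Function.iterate_add_apply, Function.iterate_add_apply]
      -- PDE at level 2k
      have hw := word_pde (2*k) x hx
      have hstep : (pd e₂)^[2*k] ((pd e₂)^[2] v) x
          = c * (pd e₂)^[2*k] ((pd e₁)^[2] v) x := by
        have hne : h₂₂ ≠ 0 := ne_of_gt hh₂₂
        set A := (pd e₂)^[2*k] ((pd e₂)^[2] v) x with hA'
        set B := (pd e₂)^[2*k] ((pd e₁)^[2] v) x with hB'
        rw [hc]
        field_simp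
        linarith [hw]
      rw [hstep]
      -- commute
      have hiter2 : (pd e₁)^[2] v = pd e₁ (pd e₁ v) := rfl
      have hA : (pd e₂)^[2*k] ((pd e₁)^[2] v) x = pd e₁ ((pd e₂)^[2*k] (pd e₁ v)) x := by
        rw [hiter2]; exact pd_iter_comm hU (pd_smooth hU hv e₁) e₂ e₁ (2*k) hxU
      have hB : Set.EqOn ((pd e₂)^[2*k] (pd e₁ v)) (pd e₁ ((pd e₂)^[2*k] v)) U :=
        pd_iter_comm hU hv e₂ e₁ (2*k)
      have hC : pd e₁ ((pd e₂)^[2*k] (pd e₁ v)) x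
          = pd e₁ (pd e₁ ((pd e₂)^[2*k] v)) x := pd_congr hU hB e₁ hxU
      -- use IH
      have hg : ContDiffOn ℝ (⊤ : ℕ∞) ((pd e₁)^[2*k] v) U := pd_iter_smooth hU hv e₁ (2*k)
      have hIH : Set.EqOn ((pd e₂)^[2*k] v) (fun y => c^k * (pd e₁)^[2*k] v y) V :=
        fun y hy => ih y hy
      have hD : Set.EqOn (pd e₁ ((pd e₂)^[2*k] v))
          (fun y => c^k * pd e₁ ((pd e₁)^[2*k] v) y) V := by
        intro y hy
        rw [pd_congr hV hIH e₁ hy]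
        exact pd_const_mul ((hg.contDiffAt (hU.mem_nhds (hVU hy))).differentiableAt (by simp))
          (c^k) e₁
      have hE : pd e₁ (pd e₁ ((pd e₂)^[2*k] v)) x
          = pd e₁ (fun y => c^k * pd e₁ ((pd e₁)^[2*k] v) y) x := pd_congr hV hD e₁ hx
      have hg1 : DifferentiableAt ℝ (pd e₁ ((pd e₁)^[2*k] v)) x :=
        ((pd_smooth hU hg e₁).contDiffAt (hU.mem_nhds hxU)).differentiableAt (by simp)
      have hF2 : pd e₁ (fun y => c^k * pd e₁ ((pd e₁)^[2*k] v) y) x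
          = c^k * pd e₁ (pd e₁ ((pd e₁)^[2*k] v)) x := pd_const_mul hg1 (c^k) e₁
      have hfin : (pd e₁)^[2*k] ((pd e₁)^[2] v) x
          = pd e₁ (pd e₁ ((pd e₁)^[2*k] v)) x := by
        rw [← Function.iterate_add_apply, add_comm, Function.iterate_add_apply]
        rfl
      rw [hA, hC, hE, hF2, hfin]
      ring
  -- conclusion
  intro p x₁ hx₁
  have hxU : ((x₁, (0:ℝ)) : ℝ × ℝ) ∈ U := hseg x₁ hx₁
  have part1 : ∀ n : ℕ, iteratedDeriv n (fun t => v (t, 0)) x₁ = 0 := fun n =>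
    zero_iter isOpen_Ioo hbdry n x₁ hx₁
  refine ⟨part1 p, ?_⟩
  rw [slice_snd hU hv (2*p) x₁ 0 hxU]
  -- boundary limit
  set F : ℝ × ℝ → ℝ := fun x => (pd e₂)^[2*p] v x - c^p * (pd e₁)^[2*p] v x with hFdef
  have hFcont : ContinuousAt F (x₁, 0) := by
    have h1 := ((pd_iter_smooth hU hv e₂ (2*p)).contDiffAt (hU.mem_nhds hxU)).continuousAt
    have h2 := ((pd_iter_smooth hU hv e₁ (2*p)).contDiffAt (hU.mem_nhds hxU)).continuousAt
    exact h1.sub (h2.const_mul _)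
  have hF0 : ∀ y ∈ V, F y = 0 := by
    intro y hy; simp only [hFdef]; rw [main p y hy]; ring
  have hpath : Filter.Tendsto (fun t : ℝ => ((x₁, t) : ℝ × ℝ)) (nhdsWithin 0 (Set.Ioi 0))
      (nhds (x₁, 0)) := by
    have : Continuous (fun t : ℝ => ((x₁, t) : ℝ × ℝ)) := by fun_prop
    exact (this.tendsto 0).mono_left nhdsWithin_le_nhds
  have hmem : ∀ᶠ t in nhdsWithin (0:ℝ) (Set.Ioi 0), ((x₁, t) : ℝ × ℝ) ∈ V := by
    have hUev : ∀ᶠ t in nhdsWithin (0:ℝ) (Set.Ioi 0), ((x₁, t) : ℝ × ℝ) ∈ U := by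
      apply Filter.Eventually.filter_mono nhdsWithin_le_nhds
      have : Continuous (fun t : ℝ => ((x₁, t) : ℝ × ℝ)) := by fun_prop
      exact this.continuousAt.preimage_mem_nhds (hU.mem_nhds hxU)
    filter_upwards [hUev, self_mem_nhdsWithin] with t htU ht
    exact ⟨htU, ht⟩
  have htend1 : Filter.Tendsto (fun t : ℝ => F (x₁, t)) (nhdsWithin 0 (Set.Ioi 0))
      (nhds (F (x₁, 0))) := hFcont.tendsto.comp hpath
  have htend2 : Filter.Tendsto (fun t : ℝ => F (x₁, t)) (nhdsWithin 0 (Set.Ioi 0))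
      (nhds 0) := by
    apply Filter.Tendsto.congr' _ tendsto_const_nhds
    filter_upwards [hmem] with t ht
    exact (hF0 _ ht).symm
  have hF00 : F (x₁, 0) = 0 := tendsto_nhds_unique htend1 htend2
  have : (pd e₂)^[2*p] v (x₁, 0) = c^p * (pd e₁)^[2*p] v (x₁, 0) := by
    have := hF00; simp only [hFdef] at this; linarith
  rw [this, ← slice_fst hU hv (2*p) x₁ 0 hxU, part1 (2*p)]
  ring
end

section
/- There exists a constant C > 0 with the following property. Let Υ⁻ = (−∞,0)×(0,1) ⊆ ℝ². For every ψ : ℝ² → ℝ that is continuously differentiable on an open set containing the closure of Υ⁻ and satisfies ∫_{Υ⁻} ‖∇ψ‖² dξ < ∞, one has ∫_{Υ⁻} min(1, 1/|ξ₁|)² ψ(ξ)² dξ ≤ C ( ∫_{(−2,0)×(0,1)} ψ(ξ)² dξ + ∫_{Υ⁻} ‖∇ψ(ξ)‖² dξ ). -/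
/-!
On each horizontal line of the strip the estimate is one-dimensional. For `a < 0`, the derivative
of `-g t ^ 2 / t` is `g² / t² - 2 g g' / t`; absorbing the cross term by AM–GM gives Hardy's
inequality `∫_{t ≤ a} g² / t² ≤ 2 g(a)² / |a| + 4 ∫_{t ≤ a} g'²`. Averaging over the endpoint
`a ∈ (-2, -1)` trades `g(a)²` for the `L²` norm of `g` near the end of the strip, and integrating
over the cross-section bounds the part `ξ₁ ≤ -2`, where the weight is `1 / |ξ₁|`. On `(-2, 0)` the
weight is at most `1`.
-/

open MeasureTheory

/-- Squared norm of the gradient of `ψ : ℝ × ℝ → ℝ`. -/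
noncomputable def gradSq (ψ : ℝ × ℝ → ℝ) (ξ : ℝ × ℝ) : ℝ :=
  (deriv (fun t => ψ (t, ξ.2)) ξ.1) ^ 2 + (deriv (fun s => ψ (ξ.1, s)) ξ.2) ^ 2

open Set

section Hardy

variable {g g' : ℝ → ℝ} {a b : ℝ}

lemma two_mul_mul_div_le (x y t : ℝ) : 2 * x * y / t ≤ x ^ 2 / t ^ 2 / 2 + 2 * y ^ 2 := by
  rw [← div_pow, show 2 * x * y / t = 2 * (x / t) * y by ring]
  nlinarith [sq_nonneg (x / t - 2 * y)]

theorem integral_sq_div_sq_le_of_hasDerivAt (hba : b ≤ a) (ha : a < 0)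
    (hg : ∀ t ∈ Icc b a, HasDerivAt g (g' t) t) (hg' : ContinuousOn g' (Icc b a)) :
    ∫ t in b..a, g t ^ 2 / t ^ 2 ≤ 2 * (g a ^ 2 / -a) + 4 * ∫ t in b..a, g' t ^ 2 := by
  have hne : ∀ t ∈ Icc b a, t ≠ 0 := fun t ht => (ht.2.trans_lt ha).ne
  have hgc : ContinuousOn g (Icc b a) := fun t ht => (hg t ht).continuousAt.continuousWithinAt
  have hI : IntervalIntegrable (fun t => g t ^ 2 / t ^ 2) volume b a :=
    ((hgc.pow 2).div (continuousOn_id.pow 2) fun t ht => pow_ne_zero 2 (hne t ht))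
      |>.intervalIntegrable_of_Icc hba
  have hJ : IntervalIntegrable (fun t => 2 * g t * g' t / t) volume b a :=
    (((continuousOn_const.mul hgc).mul hg').div continuousOn_id hne).intervalIntegrable_of_Icc hba
  have hK : IntervalIntegrable (fun t => g' t ^ 2) volume b a :=
    (hg'.pow 2).intervalIntegrable_of_Icc hba
  have hibp : (∫ t in b..a, g t ^ 2 / t ^ 2) - ∫ t in b..a, 2 * g t * g' t / t
      = g a ^ 2 / -a + g b ^ 2 / b := by
    rw [← intervalIntegral.integral_sub hI hJ,
      intervalIntegral.integral_eq_sub_of_hasDerivAt (f := fun t => -g t ^ 2 / t) _ (hI.sub hJ)]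
    · ring
    intro t ht
    rw [uIcc_of_le hba] at ht
    refine (((hg t ht).fun_pow 2).fun_neg.fun_div (hasDerivAt_id' t) (hne t ht)).congr_deriv ?_
    field_simp [hne t ht]
    ring
  have hamgm : ∫ t in b..a, 2 * g t * g' t / t
      ≤ (∫ t in b..a, g t ^ 2 / t ^ 2) / 2 + 2 * ∫ t in b..a, g' t ^ 2 := by
    rw [← intervalIntegral.integral_div, ← intervalIntegral.integral_const_mul,
      ← intervalIntegral.integral_add (hI.div_const 2) (hK.const_mul 2)]
    exact intervalIntegral.integral_mono_on hba hJ ((hI.div_const 2).add (hK.const_mul 2))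
      fun t _ => two_mul_mul_div_le (g t) (g' t) t
  have hb : g b ^ 2 / b ≤ 0 := div_nonpos_of_nonneg_of_nonpos (sq_nonneg _) (hba.trans ha.le)
  linarith

theorem setLIntegral_Ioc_sq_div_sq_le_of_hasDerivAt (hba : b ≤ a) (ha : a < 0)
    (hg : ∀ t ∈ Icc b a, HasDerivAt g (g' t) t) (hg' : ContinuousOn g' (Icc b a)) :
    ∫⁻ t in Ioc b a, ENNReal.ofReal (g t ^ 2 / t ^ 2)
      ≤ ENNReal.ofReal (2 * (g a ^ 2 / -a)) + 4 * ∫⁻ t in Ioc b a, ENNReal.ofReal (g' t ^ 2) := by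
  have hgc : ContinuousOn g (Icc b a) := fun t ht => (hg t ht).continuousAt.continuousWithinAt
  have hI : IntegrableOn (fun t => g t ^ 2 / t ^ 2) (Ioc b a) :=
    ((hgc.pow 2).div (continuousOn_id.pow 2) fun t ht => pow_ne_zero 2 (ht.2.trans_lt ha).ne)
      |>.integrableOn_Icc.mono_set Ioc_subset_Icc_self
  have hK : IntegrableOn (fun t => g' t ^ 2) (Ioc b a) :=
    (hg'.pow 2).integrableOn_Icc.mono_set Ioc_subset_Icc_self
  rw [← ofReal_integral_eq_lintegral_ofReal hI (.of_forall fun t => by positivity),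
    ← ofReal_integral_eq_lintegral_ofReal hK (.of_forall fun t => by positivity),
    ← ENNReal.ofReal_ofNat 4, ← ENNReal.ofReal_mul (by norm_num)]
  refine (ENNReal.ofReal_le_ofReal ?_).trans ENNReal.ofReal_add_le
  simpa only [intervalIntegral.integral_of_le hba] using
    integral_sq_div_sq_le_of_hasDerivAt hba ha hg hg'

lemma setLIntegral_Iic_le_of_forall_Ioc {f : ℝ → ENNReal} {M : ENNReal}
    (h : ∀ b ≤ a, ∫⁻ t in Ioc b a, f t ≤ M) : ∫⁻ t in Iic a, f t ≤ M := by
  have hunion : Iic a = ⋃ n : ℕ, Ioc (a - n) a := by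
    ext t
    simp only [mem_Iic, mem_iUnion, mem_Ioc]
    exact ⟨fun ht => (exists_nat_gt (a - t)).imp fun n hn => ⟨by linarith, ht⟩,
      fun ⟨_, hn⟩ => hn.2⟩
  have hmono : Monotone fun n : ℕ => Ioc (a - n) a := fun m n hmn =>
    Ioc_subset_Ioc_left (by gcongr)
  rw [hunion, setLIntegral_iUnion_of_directed _ hmono.directed_le]
  exact iSup_le fun n => h _ (by linarith [n.cast_nonneg (α := ℝ)])

theorem setLIntegral_Iic_sq_div_sq_le_of_hasDerivAt (ha : a < 0)
    (hg : ∀ t ≤ a, HasDerivAt g (g' t) t) (hg' : ContinuousOn g' (Iic a)) :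
    ∫⁻ t in Iic a, ENNReal.ofReal (g t ^ 2 / t ^ 2)
      ≤ ENNReal.ofReal (2 * (g a ^ 2 / -a)) + 4 * ∫⁻ t in Iic a, ENNReal.ofReal (g' t ^ 2) :=
  setLIntegral_Iic_le_of_forall_Ioc fun _ hb =>
    (setLIntegral_Ioc_sq_div_sq_le_of_hasDerivAt hb ha (fun t ht => hg t ht.2)
      (hg'.mono Icc_subset_Iic_self)).trans (by gcongr; exact Ioc_subset_Iic_self)

theorem setLIntegral_Iic_neg_two_sq_div_sq_le (hg : ∀ t < 0, HasDerivAt g (g' t) t)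
    (hg' : ContinuousOn g' (Iio 0)) :
    ∫⁻ t in Iic (-2), ENNReal.ofReal (g t ^ 2 / t ^ 2)
      ≤ 2 * (∫⁻ t in Ioo (-2) (-1), ENNReal.ofReal (g t ^ 2))
        + 4 * ∫⁻ t in Iio 0, ENNReal.ofReal (g' t ^ 2) := by
  have hend : ∀ a ∈ Ioo (-2 : ℝ) (-1),
      ∫⁻ t in Iic (-2), ENNReal.ofReal (g t ^ 2 / t ^ 2)
        ≤ 2 * ENNReal.ofReal (g a ^ 2) + 4 * ∫⁻ t in Iio 0, ENNReal.ofReal (g' t ^ 2) := by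
    rintro a ⟨h2a, ha1⟩
    have ha : a < 0 := by linarith
    calc _ ≤ ∫⁻ t in Iic a, ENNReal.ofReal (g t ^ 2 / t ^ 2) :=
          lintegral_mono_set (Iic_subset_Iic.2 h2a.le)
      _ ≤ ENNReal.ofReal (2 * (g a ^ 2 / -a)) + 4 * ∫⁻ t in Iic a, ENNReal.ofReal (g' t ^ 2) :=
          setLIntegral_Iic_sq_div_sq_le_of_hasDerivAt ha (fun t ht => hg t (ht.trans_lt ha))
            (hg'.mono (Iic_subset_Iio.2 ha))
      _ ≤ 2 * ENNReal.ofReal (g a ^ 2) + 4 * ∫⁻ t in Iio 0, ENNReal.ofReal (g' t ^ 2) := by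
          rw [← ENNReal.ofReal_ofNat 2, ← ENNReal.ofReal_mul zero_le_two]
          gcongr
          exact div_le_self (sq_nonneg _) (by linarith)
  have hvol : volume (Ioo (-2 : ℝ) (-1)) = 1 := by norm_num [Real.volume_Ioo]
  calc _ = ∫⁻ _ in Ioo (-2 : ℝ) (-1), ∫⁻ t in Iic (-2), ENNReal.ofReal (g t ^ 2 / t ^ 2) := by
        rw [setLIntegral_const, hvol, mul_one]
    _ ≤ ∫⁻ a in Ioo (-2 : ℝ) (-1),
          (2 * ENNReal.ofReal (g a ^ 2) + 4 * ∫⁻ t in Iio 0, ENNReal.ofReal (g' t ^ 2)) :=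
        setLIntegral_mono' measurableSet_Ioo hend
    _ = _ := by
        rw [lintegral_add_right _ measurable_const, setLIntegral_const, hvol, mul_one,
          lintegral_const_mul' _ _ ENNReal.ofNat_ne_top]

end Hardy

theorem setLIntegral_prod_le_symm {α β : Type*} [MeasurableSpace α] [MeasurableSpace β]
    {μ : Measure α} {ν : Measure β} [SFinite μ] [SFinite ν] (s : Set α) (t : Set β)
    (f : α × β → ENNReal) :
    ∫⁻ z in s ×ˢ t, f z ∂μ.prod ν ≤ ∫⁻ y in t, ∫⁻ x in s, f (x, y) ∂μ ∂ν := by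
  rw [← Measure.prod_restrict, ← lintegral_prod_swap]
  exact lintegral_prod_le _

section PartialDeriv

variable {E F : Type*} [NormedAddCommGroup E] [NormedSpace ℝ E] [NormedAddCommGroup F]
  [NormedSpace ℝ F] {ψ : ℝ × E → F}

theorem DifferentiableAt.hasDerivAt_partial_fst {ξ : ℝ × E} (h : DifferentiableAt ℝ ψ ξ) :
    HasDerivAt (fun t => ψ (t, ξ.2)) (fderiv ℝ ψ ξ (1, 0)) ξ.1 :=
  h.hasFDerivAt.comp_hasDerivAt ξ.1 ((hasDerivAt_id ξ.1).prodMk (hasDerivAt_const ξ.1 ξ.2))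

theorem ContDiffOn.continuousOn_deriv_partial_fst {U : Set (ℝ × E)} (hU : IsOpen U)
    (hψ : ContDiffOn ℝ 1 ψ U) : ContinuousOn (fun ξ => deriv (fun t => ψ (t, ξ.2)) ξ.1) U :=
  ((hψ.continuousOn_fderiv_of_isOpen hU le_rfl).clm_apply continuousOn_const).congr fun _ hξ =>
    ((hψ.differentiableOn one_ne_zero).differentiableAt
      (hU.mem_nhds hξ)).hasDerivAt_partial_fst.deriv

end PartialDeriv

theorem setLIntegral_Iic_neg_two_prod_sq_div_sq_le {ψ : ℝ × ℝ → ℝ} {B : Set ℝ} (hB : IsOpen B)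
    (hψ : ContDiffOn ℝ 1 ψ (Iio 0 ×ˢ B)) :
    ∫⁻ ξ in Iic (-2) ×ˢ B, ENNReal.ofReal (ψ ξ ^ 2 / ξ.1 ^ 2)
      ≤ 2 * (∫⁻ ξ in Ioo (-2) (-1) ×ˢ B, ENNReal.ofReal (ψ ξ ^ 2))
        + 4 * ∫⁻ ξ in Iio 0 ×ˢ B, ENNReal.ofReal (deriv (fun t => ψ (t, ξ.2)) ξ.1 ^ 2) := by
  have hU : IsOpen (Iio (0 : ℝ) ×ˢ B) := isOpen_Iio.prod hB
  have hD := hψ.continuousOn_deriv_partial_fst hU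
  have hdiff : ∀ ξ ∈ Iio 0 ×ˢ B, DifferentiableAt ℝ ψ ξ := fun _ hξ =>
    (hψ.differentiableOn one_ne_zero).differentiableAt (hU.mem_nhds hξ)
  have hmeas : ∀ {f : ℝ × ℝ → ℝ} {A : Set ℝ}, MeasurableSet A → A ⊆ Iio 0 →
      ContinuousOn f (Iio 0 ×ˢ B) →
      AEMeasurable (fun ξ => ENNReal.ofReal (f ξ ^ 2)) (volume.restrict (A ×ˢ B)) :=
    fun hA hA0 hf => ENNReal.measurable_ofReal.comp_aemeasurable <|
      ((hf.mono (prod_mono hA0 subset_rfl)).pow 2).aemeasurable (hA.prod hB.measurableSet)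
  have hψ2 := hmeas (measurableSet_Ioo (a := (-2 : ℝ)) (b := -1))
    (Ioo_subset_Iio_self.trans (Iio_subset_Iio (by norm_num))) hψ.continuousOn
  have hD2 := hmeas measurableSet_Iio subset_rfl hD
  have hslice : ∀ s ∈ B, ∫⁻ t in Iic (-2), ENNReal.ofReal (ψ (t, s) ^ 2 / t ^ 2)
      ≤ 2 * (∫⁻ t in Ioo (-2) (-1), ENNReal.ofReal (ψ (t, s) ^ 2))
        + 4 * ∫⁻ t in Iio 0, ENNReal.ofReal (deriv (fun u => ψ (u, s)) t ^ 2) := fun s hs =>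
    setLIntegral_Iic_neg_two_sq_div_sq_le
      (fun t ht => (hdiff (t, s) ⟨ht, hs⟩).hasDerivAt_partial_fst.differentiableAt.hasDerivAt)
      (hD.comp (continuous_id.prodMk continuous_const).continuousOn fun t ht => ⟨ht, hs⟩)
  have hinner : AEMeasurable (fun s => ∫⁻ t in Ioo (-2) (-1), ENNReal.ofReal (ψ (t, s) ^ 2))
      (volume.restrict B) := by
    rw [Measure.volume_eq_prod, ← Measure.prod_restrict] at hψ2
    exact hψ2.lintegral_prod_left'
  rw [Measure.volume_eq_prod, setLIntegral_prod_symm _ hψ2, setLIntegral_prod_symm _ hD2]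
  calc _ ≤ ∫⁻ s in B, ∫⁻ t in Iic (-2), ENNReal.ofReal (ψ (t, s) ^ 2 / t ^ 2) :=
        setLIntegral_prod_le_symm _ _ _
    _ ≤ ∫⁻ s in B, (2 * (∫⁻ t in Ioo (-2) (-1), ENNReal.ofReal (ψ (t, s) ^ 2))
        + 4 * ∫⁻ t in Iio 0, ENNReal.ofReal (deriv (fun u => ψ (u, s)) t ^ 2)) :=
        setLIntegral_mono' hB.measurableSet hslice
    _ = _ := by
        rw [lintegral_add_left' (hinner.const_mul 2),
          lintegral_const_mul' _ _ ENNReal.ofNat_ne_top,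
          lintegral_const_mul' _ _ ENNReal.ofNat_ne_top]

lemma min_one_inv_abs_sq_mul_le (x : ℝ) {y : ℝ} (hy : 0 ≤ y) : min 1 |x|⁻¹ ^ 2 * y ≤ y := by
  have h0 : 0 ≤ min 1 |x|⁻¹ := le_min zero_le_one (inv_nonneg.2 (abs_nonneg x))
  exact mul_le_of_le_one_left hy (pow_le_one₀ h0 (min_le_left _ _))

lemma min_one_inv_abs_sq_mul_eq_div {x : ℝ} (hx : 1 ≤ |x|) (y : ℝ) :
    min 1 |x|⁻¹ ^ 2 * y = y / x ^ 2 := by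
  rw [min_eq_right (inv_le_one_of_one_le₀ hx), inv_pow, sq_abs, inv_mul_eq_div]

/-- Inequality (3.27) of the paper in the non-perforated semi-strip
`Υ⁻ = (−∞,0)×(0,1)`: the weighted `L²` norm of `ψ` (weight `min(1, 1/|ξ₁|)`)
is controlled by its `L²` norm near the end of the strip plus its Dirichlet energy. -/
theorem weighted_estimate_semistrip :
    ∃ C : ℝ, 0 < C ∧
      ∀ ψ : ℝ × ℝ → ℝ,
        (∃ U : Set (ℝ × ℝ), IsOpen U ∧
            closure (Set.Iio (0:ℝ) ×ˢ Set.Ioo (0:ℝ) 1) ⊆ U ∧ ContDiffOn ℝ 1 ψ U) →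
        (∫⁻ ξ in Set.Iio (0:ℝ) ×ˢ Set.Ioo (0:ℝ) 1, ENNReal.ofReal (gradSq ψ ξ)) < ⊤ →
        (∫⁻ ξ in Set.Iio (0:ℝ) ×ˢ Set.Ioo (0:ℝ) 1,
            ENNReal.ofReal ((min 1 (|ξ.1|)⁻¹) ^ 2 * ψ ξ ^ 2))
          ≤ ENNReal.ofReal C *
            ((∫⁻ ξ in Set.Ioo (-2:ℝ) 0 ×ˢ Set.Ioo (0:ℝ) 1, ENNReal.ofReal (ψ ξ ^ 2))
              + ∫⁻ ξ in Set.Iio (0:ℝ) ×ˢ Set.Ioo (0:ℝ) 1,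
                  ENNReal.ofReal (gradSq ψ ξ)) := by
  refine ⟨4, by norm_num, ?_⟩
  rintro ψ ⟨U, -, hΥU, hψ⟩ -
  set B := Ioo (0 : ℝ) 1
  set L2 := ∫⁻ ξ in Ioo (-2 : ℝ) 0 ×ˢ B, ENNReal.ofReal (ψ ξ ^ 2)
  set E := ∫⁻ ξ in Iio (0 : ℝ) ×ˢ B, ENNReal.ofReal (gradSq ψ ξ)
  have hsplit : Iio (0 : ℝ) ×ˢ B ⊆ Iic (-2) ×ˢ B ∪ Ioo (-2) 0 ×ˢ B := by
    rintro ⟨x, y⟩ ⟨hx, hy⟩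
    rcases le_or_gt x (-2) with h | h
    exacts [Or.inl ⟨h, hy⟩, Or.inr ⟨⟨h, hx⟩, hy⟩]
  have hfar : ∫⁻ ξ in Iic (-2) ×ˢ B, ENNReal.ofReal (min 1 |ξ.1|⁻¹ ^ 2 * ψ ξ ^ 2)
      ≤ 2 * L2 + 4 * E :=
    calc _ = ∫⁻ ξ in Iic (-2) ×ˢ B, ENNReal.ofReal (ψ ξ ^ 2 / ξ.1 ^ 2) :=
          setLIntegral_congr_fun (measurableSet_Iic.prod measurableSet_Ioo) fun ξ hξ => by
            rw [min_one_inv_abs_sq_mul_eq_div (le_abs.2 (Or.inr (by linarith [mem_Iic.1 hξ.1])))]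
      _ ≤ 2 * (∫⁻ ξ in Ioo (-2) (-1) ×ˢ B, ENNReal.ofReal (ψ ξ ^ 2))
          + 4 * ∫⁻ ξ in Iio 0 ×ˢ B, ENNReal.ofReal (deriv (fun t => ψ (t, ξ.2)) ξ.1 ^ 2) :=
          setLIntegral_Iic_neg_two_prod_sq_div_sq_le isOpen_Ioo
            (hψ.mono (subset_closure.trans hΥU))
      _ ≤ 2 * L2 + 4 * E := by
          gcongr 2 * ?_ + 4 * ?_
          · exact lintegral_mono_set (prod_mono (Ioo_subset_Ioo_right (by norm_num)) subset_rfl)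
          · exact lintegral_mono fun ξ =>
              ENNReal.ofReal_le_ofReal (le_add_of_nonneg_right (sq_nonneg _))
  have hnear : ∫⁻ ξ in Ioo (-2) 0 ×ˢ B, ENNReal.ofReal (min 1 |ξ.1|⁻¹ ^ 2 * ψ ξ ^ 2) ≤ L2 :=
    lintegral_mono fun ξ => ENNReal.ofReal_le_ofReal (min_one_inv_abs_sq_mul_le _ (sq_nonneg _))
  calc _ ≤ _ := (lintegral_mono_set hsplit).trans (lintegral_union_le _ _ _)
    _ ≤ 2 * L2 + 4 * E + L2 := add_le_add hfar hnear
    _ = 3 * L2 + 4 * E := by ring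
    _ ≤ 4 * L2 + 4 * E := by gcongr; norm_num
    _ = ENNReal.ofReal 4 * (L2 + E) := by rw [ENNReal.ofReal_ofNat, mul_add]
end
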